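/- arXiv:2108.13338 — 2 statements merged into one kernel-verified Lean document; each statement's English description precedes it below -/
import Mathlib

section
/- In a 1-player game (G_τ, π) for Even (Odd's strategy fixed), an odd cycle (a cycle whose maximum priority is odd) admits no finite feasible node labeling; equivalently, any node labeling feasible on an odd cycle assigns ⊤ to every node of the cycle. -/
/-!
Truncating at a larger priority only forgets more of a label, so along every arc of the cycle
the labels, truncated at the maximal priority `P`, weakly decrease. Going once around the cycle
forces these truncations to be all equal. At an arc whose tail has priority `P` the odd
condition then cannot hold strictly, so both ends are `⊤`; and a truncation is `⊤` only for the
label `⊤`, which spreads `⊤` to the whole cycle.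
-/

/-- The `p`-truncation of a label: a leaf of an ordered tree of height `h` is an `h`-tuple
`(ξ_{2h-1}, ξ_{2h-3}, …, ξ_1)` (a list of length `h`, lexicographically ordered); the
`p`-truncation deletes the components with index `< p` (for odd `p`, index `< p`; for even
`p`, index `≤ p`), i.e. keeps the first `h - p/2` entries; and `⊤|_p = ⊤`. -/
def trunc {M : Type*} (h p : ℕ) (x : WithTop (List M)) : WithTop (List M) :=
  WithTop.map (List.take (h - p / 2)) x

/-- The progress-measure condition for an arc with tail-priority `p`, tail label `x` and
head label `y` (labels in `L(T) ∪ {⊤}` for a tree `T` of height `h`): if `p` is even then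
`x|_p ≥ y|_p`; if `p` is odd then `x|_p > y|_p` or both labels are `⊤`.  An arc whose
labels satisfy this condition is *non-violated*. -/
def NV {M : Type*} [LinearOrder M] (h p : ℕ) (x y : WithTop (List M)) : Prop :=
  if Even p then trunc h p y ≤ trunc h p x
  else trunc h p y < trunc h p x ∨ (x = ⊤ ∧ y = ⊤)

namespace List

variable {M : Type*} [LinearOrder M]

theorem lt_of_take_lt_take : ∀ (k : ℕ) {l₁ l₂ : List M}, l₁.take k < l₂.take k → l₁ < l₂
  | 0, _, _, hl => by simp at hl
  | _ + 1, _, [], hl => by simp at hl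
  | _ + 1, [], _ :: _, _ => Lex.nil
  | k + 1, _ :: _, _ :: _, hl => by
    rw [take_succ_cons, take_succ_cons] at hl
    cases hl with
    | rel h => exact Lex.rel h
    | cons h => exact Lex.cons (lt_of_take_lt_take k h)

theorem take_le_take_of_le (k : ℕ) {l₁ l₂ : List M} (h : l₁ ≤ l₂) : l₁.take k ≤ l₂.take k :=
  le_of_not_gt fun hlt => (lt_of_take_lt_take k hlt).not_ge h

end List

open Fin.NatCast

namespace Fin

theorem le_of_forall_add_one_le {α : Type*} [Preorder α] {n : ℕ} {f : Fin (n + 1) → α}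
    (hf : ∀ i, f (i + 1) ≤ f i) (i j : Fin (n + 1)) : f i ≤ f j := by
  have hstep : ∀ k : ℕ, f (j + k) ≤ f j := by
    intro k
    induction k with
    | zero => simp
    | succ k ih => simpa [add_assoc] using (hf (j + k)).trans ih
  simpa using hstep (i - j).val

end Fin

@[simp]
theorem trunc_eq_top_iff {M : Type*} (h p : ℕ) (x : WithTop (List M)) :
    trunc h p x = ⊤ ↔ x = ⊤ :=
  WithTop.map_eq_top_iff

section Truncation

variable {M : Type*} [LinearOrder M]

theorem trunc_le_trunc_of_le {h p q : ℕ} (hpq : p ≤ q) {x y : WithTop (List M)}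
    (hxy : trunc h p y ≤ trunc h p x) : trunc h q y ≤ trunc h q x := by
  induction x with
  | top => exact le_top
  | coe lx =>
    induction y with
    | top => simp [trunc] at hxy
    | coe ly =>
      simp only [trunc, WithTop.map_coe, WithTop.coe_le_coe] at hxy ⊢
      have htake : ∀ l : List M, l.take (h - q / 2) = (l.take (h - p / 2)).take (h - q / 2) :=
        fun l => by rw [List.take_take, min_eq_left (by omega)]
      rw [htake lx, htake ly]
      exact List.take_le_take_of_le _ hxy

theorem NV.trunc_le {h p : ℕ} {x y : WithTop (List M)} (hNV : NV h p x y) :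
    trunc h p y ≤ trunc h p x := by
  unfold NV at hNV
  split_ifs at hNV
  · exact hNV
  · rcases hNV with hlt | ⟨rfl, rfl⟩
    · exact hlt.le
    · rfl

theorem NV.trunc_lt_or_eq_top {h p : ℕ} (hp : Odd p) {x y : WithTop (List M)}
    (hNV : NV h p x y) : trunc h p y < trunc h p x ∨ x = ⊤ := by
  rw [NV, if_neg (Nat.not_even_iff_odd.mpr hp)] at hNV
  exact hNV.imp_right And.left

end Truncation

theorem stmt_7_general {V M : Type*} [LinearOrder M]
    (h : ℕ)
    (π : V → ℕ)
    (μ : V → WithTop (List M))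
    (n : ℕ) (c : Fin (n + 1) → V)
    (hfeas : ∀ i, NV h (π (c i)) (μ (c i)) (μ (c (i + 1))))
    (P : ℕ) (hub : ∀ i, π (c i) ≤ P) (hmem : ∃ i, π (c i) = P)
    (hodd : Odd P) :
    ∀ i, μ (c i) = ⊤ := by
  set f : Fin (n + 1) → WithTop (List M) := fun i => trunc h P (μ (c i))
  have hconst : ∀ i j, f i = f j := by
    have hstep : ∀ i, f (i + 1) ≤ f i := fun i => trunc_le_trunc_of_le (hub i) (hfeas i).trunc_le
    exact fun i j => le_antisymm (Fin.le_of_forall_add_one_le hstep i j)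
      (Fin.le_of_forall_add_one_le hstep j i)
  obtain ⟨i₀, hi₀⟩ := hmem
  have htop : μ (c i₀) = ⊤ := by
    have hNV := hi₀ ▸ hfeas i₀
    exact (hNV.trunc_lt_or_eq_top hodd).resolve_left (hconst _ i₀).not_lt
  intro i
  have hfi : f i = ⊤ := by rw [hconst i i₀]; simp [f, htop]
  simpa [f] using hfi

/-- In a 1-player game for Even, an odd cycle (a cycle whose maximum
priority `P` is odd) admits no finite feasible node labeling: any node labeling that is
feasible on the cycle (all arcs of the cycle non-violated) assigns `⊤` to every node of
the cycle. -/
theorem stmt_7 {V M : Type*} [LinearOrder M]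
    (d h : ℕ) (hd : d = 2 * h)
    (π : V → ℕ) (hπ : ∀ v, 1 ≤ π v ∧ π v ≤ d)
    (μ : V → WithTop (List M))
    (hlen : ∀ (v : V) (ξ : List M), μ v = (ξ : WithTop (List M)) → ξ.length = h)
    (n : ℕ) (c : Fin (n + 1) → V)
    (hfeas : ∀ i, NV h (π (c i)) (μ (c i)) (μ (c (i + 1))))
    (P : ℕ) (hub : ∀ i, π (c i) ≤ P) (hmem : ∃ i, π (c i) = P)
    (hodd : Odd P) :
    ∀ i, μ (c i) = ⊤ :=
  stmt_7_general h π μ n c hfeas P hub hmem hodd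
end

section
/- Let μ be a node labeling such that the 1-player game graph G_τ has no loose arcs with respect to μ, and let v be a base node of G_τ. Then the threshold label μ̂(v) — the minimum over all labelings μ̃ ≥ μ(v) at v that are feasible in some cycle dominated by v in G_τ — satisfies μ̂(v) ≥ μ^{G_τ^↑}(v), where μ^{G_τ^↑} is the least simultaneous fixed point of the Lift operators of G_τ above μ. -/
/-- An arc `v → w` is *loose* w.r.t. `μ`: it is non-violated and `μ v` is not the least
label making it non-violated (i.e. some strictly smaller label would also do). -/
def Loose {V M : Type*} [LinearOrder M] (h : ℕ) (π : V → ℕ)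
    (μ : V → WithTop (List M)) (v w : V) : Prop :=
  NV h (π v) (μ v) (μ w) ∧ ∃ x < μ v, NV h (π v) x (μ w)

/-!
Without loose arcs, a labeling `μ'` that is non-violated on an arc `u → w` and dominates `μ`
at `w` dominates `μ` at `u` as well (otherwise the smaller label `μ' u` would witness that
`u → w` is loose); going backwards around the cycle from `v`, `μ̃ ≥ μ`
holds on the whole cycle. Extending `μ̃` by `⊤` off the cycle gives a labeling `≥ μ` that is
feasible in `G_τ`, so it lies above the least such labeling `μ*`, in particular at `v`.
-/

theorem List.monotone_take {α : Type*} [LinearOrder α] (n : ℕ) :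
    Monotone (List.take n : List α → List α) := by
  refine monotone_iff_forall_lt.2 fun l₁ l₂ hlt ↦ ?_
  induction hlt generalizing n with
  | nil => cases n with
    | zero => exact le_rfl
    | succ n => exact le_of_lt List.Lex.nil
  | cons _ ih => cases n with
    | zero => exact le_rfl
    | succ n =>
      rcases (ih n).lt_or_eq with hlt | heq
      · exact le_of_lt (List.Lex.cons hlt)
      · simp only [List.take_succ_cons, heq, le_refl]
  | rel hab => cases n with
    | zero => exact le_rfl
    | succ n => exact le_of_lt (List.Lex.rel hab)

section Labels

variable {M : Type*} [LinearOrder M] {h p : ℕ}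

theorem monotone_trunc : Monotone (trunc (M := M) h p) := by
  rintro x (_ | y) hxy
  · exact le_top
  · lift x to List M using ne_top_of_le_ne_top WithTop.coe_ne_top hxy
    exact WithTop.coe_le_coe.2 (List.monotone_take _ (WithTop.coe_le_coe.1 hxy))

theorem trunc_lt_top {x : WithTop (List M)} (hx : x ≠ ⊤) : trunc h p x < ⊤ := by
  lift x to List M using hx
  exact WithTop.coe_lt_top _

theorem NV.mono_left {x x' y : WithTop (List M)} (hx : x ≤ x') (hnv : NV h p x y) :
    NV h p x' y := by
  unfold NV at *
  split_ifs at hnv ⊢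
  · exact hnv.trans (monotone_trunc hx)
  · rcases hnv with hlt | ⟨rfl, rfl⟩
    · exact .inl (hlt.trans_le (monotone_trunc hx))
    · exact .inr ⟨top_le_iff.1 hx, rfl⟩

theorem NV.mono_right {x y y' : WithTop (List M)} (hy : y' ≤ y) (hnv : NV h p x y) :
    NV h p x y' := by
  unfold NV at *
  split_ifs at hnv ⊢
  · exact (monotone_trunc hy).trans hnv
  · rcases hnv with hlt | ⟨rfl, rfl⟩
    · exact .inl ((monotone_trunc hy).trans_lt hlt)
    · by_cases hy' : y' = ⊤
      · exact .inr ⟨rfl, hy'⟩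
      · exact .inl (trunc_lt_top hy')

theorem NV.top_left (y : WithTop (List M)) : NV h p ⊤ y :=
  NV.mono_right le_top (by unfold NV; split_ifs <;> simp)

theorem le_of_not_loose {V : Type*} {π : V → ℕ} {μ μ' : V → WithTop (List M)} {u w : V}
    (hloose : ¬ Loose h π μ u w) (hnv : NV h (π u) (μ' u) (μ' w)) (hw : μ w ≤ μ' w) :
    μ u ≤ μ' u := by
  by_contra! hlt
  have hnv' : NV h (π u) (μ' u) (μ w) := hnv.mono_right hw
  exact hloose ⟨hnv'.mono_left hlt.le, μ' u, hlt, hnv'⟩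

end Labels

open Fin.NatCast in
theorem Fin.forall_of_add_one_imp {n : ℕ} {P : Fin (n + 1) → Prop}
    (step : ∀ i, P (i + 1) → P i) {i₀ : Fin (n + 1)} (h₀ : P i₀) (j : Fin (n + 1)) : P j := by
  have key : ∀ k : ℕ, ∀ j : Fin (n + 1), P (j + k) → P j := by
    intro k
    induction k with
    | zero => simp
    | succ k ih =>
      intro j hj
      apply step j (ih (j + 1) _)
      rwa [Nat.cast_succ, add_comm (k : Fin (n + 1)), ← add_assoc] at hj
  apply key (i₀ - j).val j
  rwa [Fin.cast_val_eq_self, add_sub_cancel]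

theorem exists_NV_piecewise_top {V M : Type*} [LinearOrder M] {h : ℕ} {π : V → ℕ}
    {E : V → V → Prop} (hsinkless : ∀ u, ∃ u', E u u') {n : ℕ} {c : Fin (n + 1) → V}
    [DecidablePred (· ∈ Set.range c)] (hE : ∀ i, E (c i) (c (i + 1)))
    {μ' : V → WithTop (List M)} (hfeas : ∀ i, NV h (π (c i)) (μ' (c i)) (μ' (c (i + 1))))
    (u : V) :
    ∃ u', E u u' ∧
      NV h (π u) ((Set.range c).piecewise μ' ⊤ u) ((Set.range c).piecewise μ' ⊤ u') := by
  by_cases hu : u ∈ Set.range c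
  · obtain ⟨i, rfl⟩ := hu
    refine ⟨c (i + 1), hE i, ?_⟩
    simpa only [Set.piecewise_eq_of_mem _ _ _ (Set.mem_range_self _)] using hfeas i
  · obtain ⟨u', hu'⟩ := hsinkless u
    refine ⟨u', hu', ?_⟩
    simpa only [Set.piecewise_eq_of_notMem _ _ _ hu, Pi.top_apply] using NV.top_left _

theorem stmt_15_general {V M : Type*} [LinearOrder M]
    (h : ℕ)
    (π : V → ℕ)
    (E : V → V → Prop)
    (hsinkless : ∀ u, ∃ u', E u u')
    (μ : V → WithTop (List M))
    (hnoloose : ∀ v w, E v w → ¬ Loose h π μ v w)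
    (μstar : V → WithTop (List M))
    (hstar : IsLeast
      {ν : V → WithTop (List M) | μ ≤ ν ∧ ∀ u, ∃ u', E u u' ∧ NV h (π u) (ν u) (ν u')}
      μstar)
    (v : V) :
    ∀ (n : ℕ) (c : Fin (n + 1) → V) (μtil : V → WithTop (List M)),
      (∀ i, E (c i) (c (i + 1))) →
      (∃ i, c i = v) →
      (∀ i, π (c i) ≤ π v) →
      (∀ i, NV h (π (c i)) (μtil (c i)) (μtil (c (i + 1)))) →
      μ v ≤ μtil v →
      μstar v ≤ μtil v := by
  classical
  rintro n c μtil hE ⟨i₀, rfl⟩ - hfeas hμv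
  have hcycle : ∀ j, μ (c j) ≤ μtil (c j) :=
    Fin.forall_of_add_one_imp (fun i ↦ le_of_not_loose (hnoloose _ _ (hE i)) (hfeas i)) hμv
  have hext : μ ≤ (Set.range c).piecewise μtil ⊤ :=
    Set.le_piecewise (by rintro _ ⟨j, rfl⟩; exact hcycle j) (fun _ _ ↦ le_top)
  simpa using hstar.2 ⟨hext, exists_NV_piecewise_top hsinkless hE hfeas⟩ (c i₀)

/-- Let `(G_τ, π)` be a (sinkless) 1-player game for Even with arc
relation `E`, and let `μ` be a node labeling such that `G_τ` has no loose arcs w.r.t. `μ`.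
Let `μ*` be the least simultaneous fixed point of the Lift operators of `G_τ` above `μ`,
i.e. the pointwise-least labeling `ν ≥ μ` that is feasible in `G_τ` (every node has a
non-violated outgoing arc).  Then for a base node `v` (a node dominating an even cycle of
`G_τ`), the threshold label `μ̂(v)` is at least `μ*(v)`: every labeling `μ̃` that is
feasible in some cycle dominated by `v` and satisfies `μ̃(v) ≥ μ(v)` also satisfies
`μ̃(v) ≥ μ*(v)`. -/
theorem stmt_15 {V M : Type*} [LinearOrder M]
    (d h : ℕ) (hd : d = 2 * h)
    (π : V → ℕ) (hπ : ∀ u, 1 ≤ π u ∧ π u ≤ d)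
    (E : V → V → Prop)
    (hsinkless : ∀ u, ∃ u', E u u')
    (μ : V → WithTop (List M))
    (hnoloose : ∀ v w, E v w → ¬ Loose h π μ v w)
    (μstar : V → WithTop (List M))
    (hstar : IsLeast
      {ν : V → WithTop (List M) | μ ≤ ν ∧ ∀ u, ∃ u', E u u' ∧ NV h (π u) (ν u) (ν u')}
      μstar)
    (v : V)
    (hbase : ∃ (n : ℕ) (c : Fin (n + 1) → V), (∀ i, E (c i) (c (i + 1))) ∧
      (∃ i, c i = v) ∧ (∀ i, π (c i) ≤ π v) ∧ Even (π v)) :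
    ∀ (n : ℕ) (c : Fin (n + 1) → V) (μtil : V → WithTop (List M)),
      (∀ i, E (c i) (c (i + 1))) →
      (∃ i, c i = v) →
      (∀ i, π (c i) ≤ π v) →
      (∀ i, NV h (π (c i)) (μtil (c i)) (μtil (c (i + 1)))) →
      μ v ≤ μtil v →
      μstar v ≤ μtil v :=
  stmt_15_general h π E hsinkless μ hnoloose μstar hstar v
end
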